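/- arXiv:2008.03556 — 2 statements merged into one kernel-verified Lean document; each statement's English description precedes it below -/
import Mathlib

section
/- Let k be even, d ≤ n positive integers, and q = kd/2. Then ∑_{I ∈ [n]^q} hist(I)! ≤ (k/2 + 1)^{kd/2} · n^{kd/2}. -/
/-!
Appending a symbol `c` to a tuple `I ∈ [n]^q` multiplies `hist(I)!` by one more than the
multiplicity of `c` in `I`; these factors sum to `n + q` over all `c`, so
`∑_{I ∈ [n]^q} hist(I)! = n (n + 1) ⋯ (n + q - 1)`. With `q = (k/2) d ≤ (k/2) n`, each factor is
at most `(k/2 + 1) n`.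
-/

open Finset

/-- `histFact I` is `hist(I)! = ∏ i (hist(I)_i)!`, the product of factorials of the
multiplicities of the symbols appearing in the tuple `I ∈ [n]^q`. -/
def histFact {n q : ℕ} (I : Fin q → Fin n) : ℕ :=
  ∏ i : Fin n, (Finset.univ.filter (fun j => I j = i)).card.factorial

lemma card_filter_cons_eq {n q : ℕ} (c : Fin n) (I : Fin q → Fin n) (i : Fin n) :
    #{j | (Fin.cons c I : Fin (q + 1) → Fin n) j = i} =
      #{j | I j = i} + if c = i then 1 else 0 := by
  simp only [card_filter, Fin.sum_univ_succ, Fin.cons_zero, Fin.cons_succ]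
  ring

lemma histFact_cons {n q : ℕ} (c : Fin n) (I : Fin q → Fin n) :
    histFact (Fin.cons c I) = (#{j | I j = c} + 1) * histFact I := by
  unfold histFact
  rw [← mul_prod_erase univ _ (mem_univ c), ← mul_prod_erase univ _ (mem_univ c),
    card_filter_cons_eq, if_pos rfl, Nat.factorial_succ, mul_assoc]
  congr 2
  refine prod_congr rfl fun i hi => ?_
  rw [card_filter_cons_eq, if_neg (ne_of_mem_erase hi).symm, add_zero]

lemma sum_card_fiber_add_one {n q : ℕ} (I : Fin q → Fin n) :
    ∑ c : Fin n, (#{j | I j = c} + 1) = n + q := by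
  rw [sum_add_distrib, ← card_eq_sum_card_fiberwise fun j _ => mem_univ (I j)]
  simp [add_comm]

theorem sum_histFact_eq_ascFactorial (n q : ℕ) :
    ∑ I : Fin q → Fin n, histFact I = n.ascFactorial q := by
  induction q with
  | zero => simp [histFact]
  | succ q ih =>
    rw [← (Fin.consEquiv fun _ => Fin n).sum_comp, Fintype.sum_prod_type, sum_comm,
      Nat.ascFactorial_succ, ← ih, mul_sum]
    refine sum_congr rfl fun I _ => ?_
    simp only [Fin.consEquiv, Equiv.coe_fn_mk, histFact_cons, ← sum_mul, sum_card_fiber_add_one]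

theorem Nat.ascFactorial_le_pow_add_self (n k : ℕ) : n.ascFactorial k ≤ (n + k) ^ k :=
  (Nat.ascFactorial_le k n.le_succ).trans (Nat.ascFactorial_le_pow_add n k)

theorem sum_histFact_le_general {n k d : ℕ} (hk : Even k) (hdn : d ≤ n) :
    ∑ I : Fin (k * d / 2) → Fin n, histFact I ≤ (k / 2 + 1) ^ (k * d / 2) * n ^ (k * d / 2) := by
  obtain ⟨m, rfl⟩ := hk
  have hq : (m + m) * d / 2 = m * d := by
    rw [← two_mul, mul_assoc, Nat.mul_div_cancel_left _ two_pos]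
  have hm : (m + m) / 2 = m := by omega
  rw [sum_histFact_eq_ascFactorial, hq, hm, ← mul_pow]
  calc n.ascFactorial (m * d) ≤ (n + m * d) ^ (m * d) := Nat.ascFactorial_le_pow_add_self n _
    _ ≤ ((m + 1) * n) ^ (m * d) := by gcongr; nlinarith

/-- For `k` even and `1 ≤ d ≤ n`, `∑_{I ∈ [n]^{kd/2}} hist(I)! ≤ (k/2+1)^{kd/2} n^{kd/2}`. -/
theorem sum_histFact_le {n k d : ℕ} (hk : Even k) (hd : 0 < d) (hdn : d ≤ n) :
    ∑ I : Fin (k * d / 2) → Fin n, histFact I ≤ (k / 2 + 1) ^ (k * d / 2) * n ^ (k * d / 2) :=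
  sum_histFact_le_general hk hdn
end

section
/- Let k be even, d ≥ 1, and let R be an n^{kd/2} × n^{kd/2} matrix representation of f^d, i.e., f(x)^d = (x^{⊗kd/2})^T R x^{⊗kd/2} for all x ∈ ℝ^n. Let D be the diagonal matrix with D_{I,I} = √(hist(I)!) for I ∈ [n]^{kd/2}, and set N := D^{-1} R D^{-1}. Then for every x ∈ {±1}^n, |f(x)|^d ≤ ‖N‖ · ∑_{I ∈ [n]^{kd/2}} hist(I)!. -/
open Matrix

/-- The spectral (operator) norm of a real matrix. -/
noncomputable def specNorm {ι : Type*} [Fintype ι] [DecidableEq ι] (M : Matrix ι ι ℝ) : ℝ :=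
  ‖Matrix.toEuclideanCLM (𝕜 := ℝ) M‖

/-- The vector flattening of the `q`-fold tensor power of `x`. -/
def tensPow {n q : ℕ} (x : Fin n → ℝ) : (Fin q → Fin n) → ℝ :=
  fun I => ∏ t, x (I t)

/-!
Writing `v = x^{⊗q}` and `D = diag(√(hist(I)!))`, the representation gives
`f(x)^d = vᵀ R v = (D v)ᵀ N (D v)`, since `D` is symmetric and invertible.
By Cauchy–Schwarz this is at most `‖N‖ ‖D v‖²` in absolute value, and for `x ∈ {±1}ⁿ`
every coordinate of `v` is `±1`, so `‖D v‖² = ∑_I hist(I)!`.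
-/

theorem abs_dotProduct_mulVec_le_specNorm_mul {ι : Type*} [Fintype ι] [DecidableEq ι]
    (M : Matrix ι ι ℝ) (w : ι → ℝ) :
    |w ⬝ᵥ M *ᵥ w| ≤ specNorm M * ∑ i, w i ^ 2 := by
  set W : EuclideanSpace ℝ ι := WithLp.toLp 2 w
  have hinner : w ⬝ᵥ M *ᵥ w = inner ℝ W (toEuclideanCLM (𝕜 := ℝ) M W) := by
    rw [toEuclideanCLM_toLp, real_inner_comm, EuclideanSpace.inner_eq_star_dotProduct]
    simp [W]
  have hnorm : ‖W‖ ^ 2 = ∑ i, w i ^ 2 := by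
    simp [W, EuclideanSpace.norm_sq_eq]
  calc |w ⬝ᵥ M *ᵥ w| ≤ ‖W‖ * ‖toEuclideanCLM (𝕜 := ℝ) M W‖ :=
        hinner ▸ abs_real_inner_le_norm _ _
    _ ≤ ‖W‖ * (specNorm M * ‖W‖) := by gcongr; exact ContinuousLinearMap.le_opNorm _ _
    _ = specNorm M * ∑ i, w i ^ 2 := by rw [← hnorm]; ring

theorem dotProduct_mulVec_eq_conj {ι α : Type*} [Fintype ι] [DecidableEq ι] [CommRing α]
    (R D : Matrix ι ι α) (hDt : Dᵀ = D) (hD : IsUnit D.det) (v : ι → α) :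
    v ⬝ᵥ R *ᵥ v = (D *ᵥ v) ⬝ᵥ (D⁻¹ * R * D⁻¹) *ᵥ (D *ᵥ v) := by
  have hR : D * (D⁻¹ * R * D⁻¹) * D = R := by
    rw [← Matrix.mul_assoc, ← Matrix.mul_assoc, mul_nonsing_inv _ hD, Matrix.one_mul,
      Matrix.mul_assoc, nonsing_inv_mul _ hD, Matrix.mul_one]
  conv_lhs => rw [← hR]
  have hvD : v ᵥ* D = D *ᵥ v := by rw [← vecMul_transpose, hDt]
  rw [← mulVec_mulVec, ← mulVec_mulVec, dotProduct_mulVec, hvD]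

theorem histFact_pos {n q : ℕ} (I : Fin q → Fin n) : 0 < histFact I :=
  Finset.prod_pos fun _ _ => Nat.factorial_pos _

theorem tensPow_sq_eq_one {n q : ℕ} {x : Fin n → ℝ} (hx : ∀ i, x i = 1 ∨ x i = -1)
    (I : Fin q → Fin n) : tensPow x I ^ 2 = 1 := by
  rw [tensPow, ← Finset.prod_pow]
  refine Finset.prod_eq_one fun t _ => ?_
  rcases hx (I t) with h | h <;> simp [h]

theorem rescaled_certificate_general {n k d : ℕ}
    (R : Matrix (Fin (k * d / 2) → Fin n) (Fin (k * d / 2) → Fin n) ℝ)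
    (f : (Fin n → ℝ) → ℝ)
    (hrep : ∀ x : Fin n → ℝ, (f x) ^ d = dotProduct (tensPow x) (R.mulVec (tensPow x)))
    (D : Matrix (Fin (k * d / 2) → Fin n) (Fin (k * d / 2) → Fin n) ℝ)
    (hD : D = Matrix.diagonal (fun I => Real.sqrt (histFact I)))
    (N : Matrix (Fin (k * d / 2) → Fin n) (Fin (k * d / 2) → Fin n) ℝ)
    (hN : N = D⁻¹ * R * D⁻¹) :
    ∀ x : Fin n → ℝ, (∀ i, x i = 1 ∨ x i = -1) →
      |f x| ^ d ≤ specNorm N * ∑ I : Fin (k * d / 2) → Fin n, (histFact I : ℝ) := by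
  intro x hx
  have hdet : IsUnit D.det := by
    rw [hD, det_diagonal]
    exact (Finset.prod_pos fun I _ => Real.sqrt_pos.2 (mod_cast histFact_pos I)).ne'.isUnit
  have hnorm : ∑ I, (D *ᵥ tensPow x) I ^ 2 = ∑ I : Fin (k * d / 2) → Fin n, (histFact I : ℝ) := by
    refine Finset.sum_congr rfl fun I _ => ?_
    rw [hD, mulVec_diagonal, mul_pow, tensPow_sq_eq_one hx, mul_one,
      Real.sq_sqrt (Nat.cast_nonneg _)]
  calc |f x| ^ d = |(D *ᵥ tensPow x) ⬝ᵥ N *ᵥ (D *ᵥ tensPow x)| := by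
        rw [← abs_pow, hrep, hN, dotProduct_mulVec_eq_conj R D (hD ▸ diagonal_transpose _) hdet]
    _ ≤ specNorm N * ∑ I, (histFact I : ℝ) :=
        hnorm ▸ abs_dotProduct_mulVec_le_specNorm_mul N _

/-- Re-scaled matrix representation certificate: if `R` represents `f^d` and
`N = D⁻¹ R D⁻¹` with `D = diag(√(hist(I)!))`, then for `x ∈ {±1}ⁿ`,
`|f(x)|^d ≤ ‖N‖ · ∑_I hist(I)!`. -/
theorem rescaled_certificate {n k d : ℕ} (hk : Even k) (hd : 1 ≤ d)
    (R : Matrix (Fin (k * d / 2) → Fin n) (Fin (k * d / 2) → Fin n) ℝ)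
    (f : (Fin n → ℝ) → ℝ)
    (hrep : ∀ x : Fin n → ℝ, (f x) ^ d = dotProduct (tensPow x) (R.mulVec (tensPow x)))
    (D : Matrix (Fin (k * d / 2) → Fin n) (Fin (k * d / 2) → Fin n) ℝ)
    (hD : D = Matrix.diagonal (fun I => Real.sqrt (histFact I)))
    (N : Matrix (Fin (k * d / 2) → Fin n) (Fin (k * d / 2) → Fin n) ℝ)
    (hN : N = D⁻¹ * R * D⁻¹) :
    ∀ x : Fin n → ℝ, (∀ i, x i = 1 ∨ x i = -1) →
      |f x| ^ d ≤ specNorm N * ∑ I : Fin (k * d / 2) → Fin n, (histFact I : ℝ) :=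
  rescaled_certificate_general R f hrep D hD N hN
end
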